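/- Let X = A + R be real d×n matrices where A has rank at most r, let X̃ be a real d×n matrix with ‖X̃ − X‖₂ ≤ ε·‖X‖_F for some ε ≥ 0, and let X̂ = X̃_r be the best rank-r approximation of X̃. Then ‖X̂ − A‖₂ ≤ 2‖R‖₂ + 2ε‖X‖_F and consequently ‖X̂ − A‖_F ≤ sqrt(8r)·( ‖R‖₂ + ε‖X‖_F ). -/

import Mathlib

/-!
Through `X̃`: `‖X̂ - A‖₂ ≤ ‖X̃ - X̃_r‖₂ + ‖X̃ - A‖₂ ≤ 2 ‖X̃ - A‖₂` by the Eckart–Young inequality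
`‖X̃ - X̃_r‖₂ ≤ ‖X̃ - B‖₂` for `rank B ≤ r`. By orthogonal invariance, Eckart–Young reduces to the
rectangular diagonal `Σ` of singular values: `‖Σ - Σ_r‖₂ ≤ σ_{r+1}` (which is `s r`, as `s` is
0-indexed), while compressing `Σ - B` to its leading `(r+1) × (r+1)` block gives
`diag(σ₁, …, σ_{r+1})` minus a singular matrix, which is at least `σ_{r+1}` on a kernel vector of
the latter. For the Frobenius bound, `X̂ - A` has rank at most `2r`, and `‖M‖_F² = tr (Mᵀ M)` is a
sum of `rank M` nonzero eigenvalues, each at most `‖M‖₂²`.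
-/

open Matrix

/-- Spectral (ℓ2 operator) norm of a matrix. -/
noncomputable def specNorm {p q : ℕ} (M : Matrix (Fin p) (Fin q) ℝ) : ℝ :=
  ‖(Matrix.toEuclideanLin M).toContinuousLinearMap‖

/-- Frobenius norm of a matrix. -/
noncomputable def frobNorm {p q : ℕ} (M : Matrix (Fin p) (Fin q) ℝ) : ℝ :=
  Real.sqrt (∑ i, ∑ j, M i j ^ 2)

/-- The d×n rectangular "diagonal" matrix with entries s 0 ≥ s 1 ≥ … on the diagonal. -/
def diagDec (d n : ℕ) (s : ℕ → ℝ) : Matrix (Fin d) (Fin n) ℝ :=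
  Matrix.of fun i j => if (i : ℕ) = (j : ℕ) then s i else 0

/-- The same diagonal matrix truncated to its first k diagonal entries. -/
def diagTrunc (d n : ℕ) (s : ℕ → ℝ) (k : ℕ) : Matrix (Fin d) (Fin n) ℝ :=
  Matrix.of fun i j => if (i : ℕ) = (j : ℕ) ∧ (i : ℕ) < k then s i else 0

/-- A singular value decomposition M = U·Σ·Vᵀ of a d×n real matrix M: U and V are orthogonal
and the diagonal entries of Σ are the singular values σ₁ ≥ σ₂ ≥ … ≥ 0.  Every real matrix
admits such a decomposition. -/
structure SVDData (d n : ℕ) (M : Matrix (Fin d) (Fin n) ℝ) where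
  U : Matrix (Fin d) (Fin d) ℝ
  V : Matrix (Fin n) (Fin n) ℝ
  s : ℕ → ℝ
  orthU : Uᵀ * U = 1
  orthV : Vᵀ * V = 1
  nonneg : ∀ i, 0 ≤ s i
  anti : ∀ i j, i ≤ j → s j ≤ s i
  eq : M = U * diagDec d n s * Vᵀ

/-- The best rank-k approximation M_k of M: the truncated SVD keeping the top k singular
values. -/
def SVDData.trunc {d n : ℕ} {M : Matrix (Fin d) (Fin n) ℝ} (sd : SVDData d n M) (k : ℕ) :
    Matrix (Fin d) (Fin n) ℝ :=
  sd.U * diagTrunc d n sd.s k * sd.Vᵀ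

open scoped Matrix.Norms.L2Operator

theorem specNorm_eq_l2_opNorm {p q : ℕ} (M : Matrix (Fin p) (Fin q) ℝ) : specNorm M = ‖M‖ := rfl

namespace Matrix

section L2OpNorm

variable {l m n o : Type*} [Fintype l] [Fintype m] [Fintype n] [Fintype o]

theorem l2_opNorm_one_le [DecidableEq n] : ‖(1 : Matrix n n ℝ)‖ ≤ 1 := by
  rw [← diagonal_one, l2_opNorm_diagonal]
  exact (pi_norm_le_iff_of_nonneg zero_le_one).mpr fun _ => by simp

theorem l2_opNorm_le_one_of_transpose_mul_self [DecidableEq n] {M : Matrix m n ℝ}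
    (hM : Mᵀ * M = 1) : ‖M‖ ≤ 1 := by
  have h := l2_opNorm_conjTranspose_mul_self M
  rw [conjTranspose_eq_transpose_of_trivial, hM] at h
  nlinarith [norm_nonneg M, l2_opNorm_one_le (n := n)]

theorem l2_opNorm_transpose [DecidableEq m] [DecidableEq n] (M : Matrix m n ℝ) :
    ‖Mᵀ‖ = ‖M‖ := by
  simpa using l2_opNorm_conjTranspose M

theorem l2_opNorm_mul_mul_le [DecidableEq m] [DecidableEq n] [DecidableEq o]
    {P : Matrix l m ℝ} {Q : Matrix n o ℝ} (hP : ‖P‖ ≤ 1) (hQ : ‖Q‖ ≤ 1) (M : Matrix m n ℝ) :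
    ‖P * M * Q‖ ≤ ‖M‖ :=
  calc ‖P * M * Q‖ ≤ ‖P‖ * ‖M‖ * ‖Q‖ :=
        (l2_opNorm_mul _ _).trans (mul_le_mul_of_nonneg_right (l2_opNorm_mul _ _) (norm_nonneg _))
    _ ≤ 1 * ‖M‖ * 1 := by gcongr
    _ = ‖M‖ := by ring

theorem l2_opNorm_mul_mul_transpose_of_orthogonal [DecidableEq m] [DecidableEq n]
    {U : Matrix m m ℝ} {V : Matrix n n ℝ} (hU : Uᵀ * U = 1) (hV : Vᵀ * V = 1)
    (X : Matrix m n ℝ) : ‖U * X * Vᵀ‖ = ‖X‖ := by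
  have hUn : ‖U‖ ≤ 1 := l2_opNorm_le_one_of_transpose_mul_self hU
  have hVn : ‖V‖ ≤ 1 := l2_opNorm_le_one_of_transpose_mul_self hV
  have hUt : ‖Uᵀ‖ ≤ 1 := (l2_opNorm_transpose U).trans_le hUn
  have hVt : ‖Vᵀ‖ ≤ 1 := (l2_opNorm_transpose V).trans_le hVn
  refine le_antisymm (l2_opNorm_mul_mul_le hUn hVt X) ?_
  calc ‖X‖ = ‖Uᵀ * (U * X * Vᵀ) * V‖ := by
        simp only [← Matrix.mul_assoc, hU, Matrix.one_mul]
        rw [Matrix.mul_assoc, hV, Matrix.mul_one]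
    _ ≤ ‖U * X * Vᵀ‖ := l2_opNorm_mul_mul_le hUt hVn _

theorem mul_norm_le_norm_diagonal_mulVec [DecidableEq n] {t : n → ℝ} {c : ℝ} (hc : 0 ≤ c)
    (ht : ∀ i, c ≤ |t i|) (x : EuclideanSpace ℝ n) :
    c * ‖x‖ ≤ ‖(EuclideanSpace.equiv n ℝ).symm (diagonal t *ᵥ x)‖ := by
  refine (pow_le_pow_iff_left₀ (by positivity) (norm_nonneg _) two_ne_zero).mp ?_
  rw [mul_pow, EuclideanSpace.norm_sq_eq, EuclideanSpace.norm_sq_eq, Finset.mul_sum]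
  refine Finset.sum_le_sum fun i _ => ?_
  have hti : c ^ 2 ≤ t i ^ 2 := sq_abs (t i) ▸ pow_le_pow_left₀ hc (ht i) 2
  simpa [mulVec_diagonal, mul_pow] using mul_le_mul_of_nonneg_right hti (sq_nonneg (x i))

theorem le_l2_opNorm_diagonal_sub [DecidableEq n] {t : n → ℝ} {c : ℝ} (hc : 0 ≤ c)
    (ht : ∀ i, c ≤ |t i|) {C : Matrix n n ℝ} (hC : C.rank < Fintype.card n) :
    c ≤ ‖diagonal t - C‖ := by
  obtain ⟨v, hv, hCv⟩ : ∃ v ≠ 0, C *ᵥ v = 0 := by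
    rw [exists_mulVec_eq_zero_iff]
    by_contra h
    exact hC.ne (rank_of_isUnit C ((isUnit_iff_isUnit_det C).mpr (Ne.isUnit h)))
  set x : EuclideanSpace ℝ n := WithLp.toLp 2 v
  have hx : 0 < ‖x‖ := norm_pos_iff.mpr (by simpa [x] using hv)
  have h := l2_opNorm_mulVec (diagonal t - C) x
  rw [sub_mulVec, hCv, sub_zero] at h
  exact le_of_mul_le_mul_right ((mul_norm_le_norm_diagonal_mulVec hc ht x).trans h) hx

end L2OpNorm

theorem rank_sub_le {m n K : Type*} [Fintype n] [Field K] (A B : Matrix m n K) :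
    (A - B).rank ≤ A.rank + B.rank := by
  have hle : LinearMap.range (A - B).mulVecLin ≤
      LinearMap.range A.mulVecLin ⊔ LinearMap.range B.mulVecLin := by
    rintro y ⟨x, rfl⟩
    rw [mulVecLin_apply, sub_mulVec]
    exact Submodule.sub_mem _ (Submodule.mem_sup_left ⟨x, rfl⟩) (Submodule.mem_sup_right ⟨x, rfl⟩)
  exact (Submodule.finrank_mono hle).trans (Submodule.finrank_add_le_finrank_add_finrank _ _)

end Matrix

section diagDec

/- `diagDec` is used below with arbitrary diagonals, not only decreasing ones; `diagDec d k 1` is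
the `d × k` partial identity. -/

variable {d k n : ℕ}

theorem diagDec_mul_diagDec (s t : ℕ → ℝ) :
    diagDec d k s * diagDec k n t = diagTrunc d n (s * t) k := by
  ext i j
  simp only [mul_apply, diagDec, diagTrunc, of_apply, Pi.mul_apply]
  by_cases hik : (i : ℕ) < k
  · rw [Finset.sum_eq_single ⟨i, hik⟩ (fun b _ hb => by simp [Fin.ext_iff] at hb ⊢; grind)
      (by simp)]
    split_ifs <;> grind
  · rw [if_neg (by tauto)]
    exact Finset.sum_eq_zero fun b _ => by grind

theorem diagTrunc_eq_diagDec (s : ℕ → ℝ) (h : min d n ≤ k) :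
    diagTrunc d n s k = diagDec d n s := by
  ext i j
  simp only [diagDec, diagTrunc, of_apply]
  grind

theorem diagDec_sub_diagTrunc (s : ℕ → ℝ) :
    diagDec d n s - diagTrunc d n s k = diagDec d n (fun i => if i < k then 0 else s i) := by
  ext i j
  simp only [Matrix.sub_apply, diagDec, diagTrunc, of_apply]
  split_ifs <;> grind

theorem transpose_diagDec (s : ℕ → ℝ) : (diagDec d n s)ᵀ = diagDec n d s := by
  ext i j
  simp only [transpose_apply, diagDec, of_apply]
  grind

theorem diagDec_self (s : ℕ → ℝ) : diagDec n n s = diagonal fun i : Fin n => s i := by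
  ext i j
  simp only [diagDec, diagonal_apply, of_apply, Fin.ext_iff]

theorem l2_opNorm_diagDec_one_le (h : k ≤ d) : ‖diagDec d k (1 : ℕ → ℝ)‖ ≤ 1 := by
  refine l2_opNorm_le_one_of_transpose_mul_self ?_
  rw [transpose_diagDec, diagDec_mul_diagDec, diagTrunc_eq_diagDec _ (by omega), one_mul,
    diagDec_self]
  exact diagonal_one

theorem l2_opNorm_diagDec_le {s : ℕ → ℝ} {c : ℝ} (hc : 0 ≤ c)
    (hs : ∀ i < min d n, |s i| ≤ c) : ‖diagDec d n s‖ ≤ c := by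
  have hfac : diagDec d n s = diagDec d (min d n) (1 : ℕ → ℝ) * diagDec (min d n) (min d n) s *
      (diagDec n (min d n) (1 : ℕ → ℝ))ᵀ := by
    rw [transpose_diagDec, diagDec_mul_diagDec, diagTrunc_eq_diagDec _ (by omega),
      diagDec_mul_diagDec, diagTrunc_eq_diagDec _ (by omega), one_mul, mul_one]
  have hP : ‖diagDec d (min d n) (1 : ℕ → ℝ)‖ ≤ 1 := l2_opNorm_diagDec_one_le (min_le_left d n)
  have hQ : ‖(diagDec n (min d n) (1 : ℕ → ℝ))ᵀ‖ ≤ 1 := by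
    rw [l2_opNorm_transpose]
    exact l2_opNorm_diagDec_one_le (min_le_right d n)
  rw [hfac]
  refine (l2_opNorm_mul_mul_le hP hQ _).trans ?_
  rw [diagDec_self, l2_opNorm_diagonal]
  exact (pi_norm_le_iff_of_nonneg hc).mpr fun i => by simpa using hs i i.isLt

theorem le_l2_opNorm_diagDec_sub {s : ℕ → ℝ} (hs : Antitone s) {r : ℕ} (hr : 0 ≤ s r)
    (hd : r < d) (hn : r < n) {B : Matrix (Fin d) (Fin n) ℝ} (hB : B.rank ≤ r) :
    s r ≤ ‖diagDec d n s - B‖ := by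
  set P := diagDec (r + 1) d (1 : ℕ → ℝ)
  set Q := diagDec n (r + 1) (1 : ℕ → ℝ)
  have hP : ‖P‖ ≤ 1 := by
    rw [show P = (diagDec d (r + 1) 1)ᵀ from (transpose_diagDec _).symm, l2_opNorm_transpose]
    exact l2_opNorm_diagDec_one_le hd
  have hQ : ‖Q‖ ≤ 1 := l2_opNorm_diagDec_one_le hn
  have hPQ : P * diagDec d n s * Q = diagonal fun i : Fin (r + 1) => s i := by
    rw [diagDec_mul_diagDec, diagTrunc_eq_diagDec _ (by omega), diagDec_mul_diagDec,
      diagTrunc_eq_diagDec _ (by omega), one_mul, mul_one, diagDec_self]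
  have hrank : (P * B * Q).rank < Fintype.card (Fin (r + 1)) := by
    rw [Fintype.card_fin]
    exact ((rank_mul_le_left _ _).trans (rank_mul_le_right _ _)).trans_lt (Nat.lt_succ_of_le hB)
  calc s r ≤ ‖(diagonal fun i : Fin (r + 1) => s i) - P * B * Q‖ :=
        le_l2_opNorm_diagonal_sub hr
          (fun i => (hs (Nat.lt_succ_iff.mp i.isLt)).trans (le_abs_self _)) hrank
    _ = ‖P * (diagDec d n s - B) * Q‖ := by rw [Matrix.mul_sub, Matrix.sub_mul, hPQ]
    _ ≤ ‖diagDec d n s - B‖ := l2_opNorm_mul_mul_le hP hQ _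

theorem l2_opNorm_diagDec_sub_diagTrunc_le {s : ℕ → ℝ} (hs : Antitone s) (hs0 : ∀ i, 0 ≤ s i)
    {r : ℕ} {B : Matrix (Fin d) (Fin n) ℝ} (hB : B.rank ≤ r) :
    ‖diagDec d n s - diagTrunc d n s r‖ ≤ ‖diagDec d n s - B‖ := by
  rw [diagDec_sub_diagTrunc]
  by_cases h : r < d ∧ r < n
  · refine (l2_opNorm_diagDec_le (hs0 r) fun i _ => ?_).trans
      (le_l2_opNorm_diagDec_sub hs (hs0 r) h.1 h.2 hB)
    split_ifs with hi
    · simpa using hs0 r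
    · rw [abs_of_nonneg (hs0 i)]
      exact hs (not_lt.mp hi)
  · refine (l2_opNorm_diagDec_le le_rfl fun i hi => ?_).trans (norm_nonneg _)
    rw [if_pos (by omega), abs_zero]

end diagDec

section frobNorm

variable {p q : ℕ}

theorem sq_frobNorm_eq_trace (M : Matrix (Fin p) (Fin q) ℝ) :
    frobNorm M ^ 2 = (Mᴴ * M).trace := by
  rw [frobNorm, Real.sq_sqrt (by positivity), Finset.sum_comm]
  simp [trace, mul_apply, sq]

theorem eigenvalues_conjTranspose_mul_self_le (M : Matrix (Fin p) (Fin q) ℝ) (i : Fin q) :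
    (isHermitian_conjTranspose_mul_self M).eigenvalues i ≤ ‖M‖ ^ 2 := by
  have : Nonempty (Fin q) := ⟨i⟩
  calc _ ≤ ‖(isHermitian_conjTranspose_mul_self M).eigenvalues i‖ := le_abs_self _
    _ ≤ ‖Mᴴ * M‖ := spectrum.norm_le_norm_of_mem
        ((isHermitian_conjTranspose_mul_self M).eigenvalues_mem_spectrum_real i)
    _ = ‖M‖ ^ 2 := by rw [l2_opNorm_conjTranspose_mul_self, sq]

theorem frobNorm_le_sqrt_rank_mul (M : Matrix (Fin p) (Fin q) ℝ) :
    frobNorm M ≤ √M.rank * ‖M‖ := by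
  set hH := isHermitian_conjTranspose_mul_self M
  have hsum : ∑ i, hH.eigenvalues i ≤ M.rank * ‖M‖ ^ 2 := by
    rw [← Finset.sum_filter_ne_zero, ← rank_conjTranspose_mul_self, hH.rank_eq_card_non_zero_eigs,
      Fintype.card_subtype, ← nsmul_eq_mul, ← Finset.sum_const]
    exact Finset.sum_le_sum fun i _ => eigenvalues_conjTranspose_mul_self_le M i
  calc frobNorm M = √(Mᴴ * M).trace := by
        rw [← sq_frobNorm_eq_trace]
        exact (Real.sqrt_sq (Real.sqrt_nonneg _)).symm
    _ = √(∑ i, hH.eigenvalues i) := by rw [hH.trace_eq_sum_eigenvalues]; rfl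
    _ ≤ √(M.rank * ‖M‖ ^ 2) := Real.sqrt_le_sqrt hsum
    _ = √M.rank * ‖M‖ := by rw [Real.sqrt_mul (Nat.cast_nonneg _), Real.sqrt_sq (norm_nonneg M)]

end frobNorm

namespace SVDData

variable {d n : ℕ} {M : Matrix (Fin d) (Fin n) ℝ} (sd : SVDData d n M)

theorem rank_trunc_le (r : ℕ) : (sd.trunc r).rank ≤ r :=
  calc (sd.trunc r).rank ≤ (diagTrunc d n sd.s r).rank :=
        (rank_mul_le_left _ _).trans (rank_mul_le_right _ _)
    _ = (diagDec d r sd.s * diagDec r n (1 : ℕ → ℝ)).rank := by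
        rw [diagDec_mul_diagDec, mul_one]
    _ ≤ r := (rank_mul_le_left _ _).trans (rank_le_width _)

theorem sub_trunc_eq (r : ℕ) :
    M - sd.trunc r = sd.U * (diagDec d n sd.s - diagTrunc d n sd.s r) * sd.Vᵀ := by
  rw [Matrix.mul_sub, Matrix.sub_mul, ← sd.eq, trunc]

theorem l2_opNorm_sub_trunc_le {r : ℕ} {B : Matrix (Fin d) (Fin n) ℝ} (hB : B.rank ≤ r) :
    ‖M - sd.trunc r‖ ≤ ‖M - B‖ := by
  have hB' : (sd.Uᵀ * B * sd.V).rank ≤ r :=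
    ((rank_mul_le_left _ _).trans (rank_mul_le_right _ _)).trans hB
  have hMB : M - B = sd.U * (diagDec d n sd.s - sd.Uᵀ * B * sd.V) * sd.Vᵀ := by
    rw [Matrix.mul_sub, Matrix.sub_mul, ← sd.eq]
    simp only [← Matrix.mul_assoc, mul_eq_one_comm.mp sd.orthU, Matrix.one_mul]
    rw [Matrix.mul_assoc, mul_eq_one_comm.mp sd.orthV, Matrix.mul_one]
  calc ‖M - sd.trunc r‖ = ‖diagDec d n sd.s - diagTrunc d n sd.s r‖ := by
        rw [sub_trunc_eq, l2_opNorm_mul_mul_transpose_of_orthogonal sd.orthU sd.orthV]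
    _ ≤ ‖diagDec d n sd.s - sd.Uᵀ * B * sd.V‖ :=
        l2_opNorm_diagDec_sub_diagTrunc_le (fun i j h => sd.anti i j h) sd.nonneg hB'
    _ = ‖M - B‖ := by rw [hMB, l2_opNorm_mul_mul_transpose_of_orthogonal sd.orthU sd.orthV]

end SVDData

theorem noisy_parameter_recovery_general
    {d n : ℕ} (A R X Xt : Matrix (Fin d) (Fin n) ℝ) (r : ℕ)
    (hX : X = A + R) (hrank : A.rank ≤ r)
    (ε : ℝ) (h : specNorm (Xt - X) ≤ ε * frobNorm X)
    (sXt : SVDData d n Xt) :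
    specNorm (sXt.trunc r - A) ≤ 2 * specNorm R + 2 * ε * frobNorm X ∧
      frobNorm (sXt.trunc r - A) ≤
        Real.sqrt (8 * r) * (specNorm R + ε * frobNorm X) := by
  simp only [specNorm_eq_l2_opNorm] at h ⊢
  set δ := ‖R‖ + ε * frobNorm X
  have hXtA : ‖Xt - A‖ ≤ δ :=
    calc ‖Xt - A‖ = ‖(Xt - X) + R‖ := by rw [hX]; abel_nf
      _ ≤ δ := (norm_add_le _ _).trans (by linarith)
  have hspec : ‖sXt.trunc r - A‖ ≤ 2 * δ :=
    calc ‖sXt.trunc r - A‖ ≤ ‖sXt.trunc r - Xt‖ + ‖Xt - A‖ := norm_sub_le_norm_sub_add_norm_sub ..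
      _ ≤ 2 * δ := by linarith [norm_sub_rev Xt (sXt.trunc r), sXt.l2_opNorm_sub_trunc_le hrank]
  have hrk : (sXt.trunc r - A).rank ≤ 2 * r :=
    (rank_sub_le _ _).trans (by linarith [sXt.rank_trunc_le r])
  refine ⟨by linarith, ?_⟩
  calc frobNorm (sXt.trunc r - A) ≤ √(sXt.trunc r - A).rank * ‖sXt.trunc r - A‖ :=
        frobNorm_le_sqrt_rank_mul _
    _ ≤ √(2 * r) * (2 * δ) := by gcongr; exact_mod_cast hrk
    _ = √(8 * r) * δ := by
        rw [show (8 : ℝ) * r = 2 ^ 2 * (2 * r) by ring,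
          Real.sqrt_mul' _ (by positivity : (0 : ℝ) ≤ 2 * r), Real.sqrt_sq zero_le_two]
        ring

/-- Proposition 2 (noisy parameter recovery): let X = A + R with A of rank at most r, let X̃
satisfy ‖X̃ − X‖₂ ≤ ε·‖X‖_F with ε ≥ 0, and let X̂ = X̃_r be the best rank-r approximation
(truncated SVD) of X̃.  Then ‖X̂ − A‖₂ ≤ 2‖R‖₂ + 2ε‖X‖_F and consequently
‖X̂ − A‖_F ≤ sqrt(8r)·(‖R‖₂ + ε‖X‖_F). -/
theorem noisy_parameter_recovery
    {d n : ℕ} (A R X Xt : Matrix (Fin d) (Fin n) ℝ) (r : ℕ)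
    (hX : X = A + R) (hrank : A.rank ≤ r)
    (ε : ℝ) (hε : 0 ≤ ε) (h : specNorm (Xt - X) ≤ ε * frobNorm X)
    (sXt : SVDData d n Xt) :
    specNorm (sXt.trunc r - A) ≤ 2 * specNorm R + 2 * ε * frobNorm X ∧
      frobNorm (sXt.trunc r - A) ≤
        Real.sqrt (8 * r) * (specNorm R + ε * frobNorm X) :=
  noisy_parameter_recovery_general A R X Xt r hX hrank ε h sXt
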